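/- arXiv:2603.16582 — 9 statements merged into one kernel-verified Lean document; each statement's English description precedes it below -/
import Mathlib

section
/- Let U ⊆ ℂⁿ be an open set that is star-shaped with respect to a point a ∈ U, and let f : U → ℂ be holomorphic. For j = 1,…,n define F_j : U → ℂ by F_j(z) = ∫₀¹ f(a + t(z−a)) (z_j − a_j) dt. Then each F_j is complex differentiable on U with partial derivatives ∂F_j/∂z_k(z) = ∫₀¹ (∂f/∂z_k)(a + t(z−a)) · t · (z_j − a_j) dt for every k ∈ {1,…,n} \ {j}, and ∂F_j/∂z_j(z) = ∫₀¹ [ (∂f/∂z_j)(a + t(z−a)) · t · (z_j − a_j) + f(a + t(z−a)) ] dt. -/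
/-!
Differentiating under the integral sign, `z ↦ ∫₀¹ f (a + t (z - a)) dt` has derivative
`∫₀¹ t f' (a + t (z - a)) dt`, and `F j` is this function times `z j - a j`, so the product rule
gives the formulas. Dominating the differentiated integrand needs a bound on `f'` near the segment
`[a, z]`, which follows from compactness once `f'` is known to be continuous; in several variables
this continuity comes from the Cauchy estimate applied to `f` minus its first-order Taylor
polynomial.
-/

open Metric Set Filter Topology MeasureTheory Interval

theorem IsCompact.exists_bound_on_cthickening_of_continuousOn {α β : Type*}
    [PseudoMetricSpace α] [SeminormedAddCommGroup β] {K U : Set α} {g : α → β} (hK : IsCompact K)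
    (hU : IsOpen U) (hKU : K ⊆ U) (hg : ContinuousOn g U) :
    ∃ δ > 0, ∃ C, cthickening δ K ⊆ U ∧ ∀ y ∈ cthickening δ K, ‖g y‖ ≤ C := by
  obtain ⟨C, hC⟩ := hK.exists_bound_of_continuousOn (hg.mono hKU)
  obtain ⟨δ, hδ, hδV⟩ := hK.exists_cthickening_subset_open
    (hg.norm.isOpen_inter_preimage hU isOpen_Iio)
    fun y hy => ⟨hKU hy, (hC y hy).trans_lt (lt_add_one C)⟩
  exact ⟨δ, hδ, C + 1, fun y hy => (hδV hy).1, fun y hy => (hδV hy).2.le⟩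

section
variable {E F : Type*} [NormedAddCommGroup E] [NormedSpace ℂ E] [NormedAddCommGroup F]
  [NormedSpace ℂ F] {f : E → F} {U : Set E}

theorem norm_fderiv_le_of_forall_mem_ball_norm_le {x : E} {r M : ℝ}
    (hf : DifferentiableOn ℂ f (ball x r)) (hr : 0 < r) (hM : ∀ y ∈ ball x r, ‖f y‖ ≤ M) :
    ‖fderiv ℂ f x‖ ≤ 2 * M / r := by
  refine Complex.norm_fderiv_le_div_of_mapsTo_ball hf (fun y hy => ?_) hr
  rw [mem_closedBall, dist_eq_norm]
  linarith [norm_sub_le (f y) (f x), hM y hy, hM x (mem_ball_self hr)]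

theorem continuousOn_fderiv_of_isOpen (hU : IsOpen U) (hf : DifferentiableOn ℂ f U) :
    ContinuousOn (fderiv ℂ f) U := by
  intro x hx
  refine (Metric.continuousAt_iff.2 fun ε hε => ?_).continuousWithinAt
  set g : E → F := fun y => f y - f x - fderiv ℂ f x (y - x)
  obtain ⟨ρ, hρ, hρx⟩ := Metric.eventually_nhds_iff_ball.1 <|
    ((hf.differentiableAt (hU.mem_nhds hx)).hasFDerivAt.isLittleO.def
      (by positivity : 0 < ε / 8)).and (hU.mem_nhds hx)
  refine ⟨ρ / 2, half_pos hρ, fun x' hx' => ?_⟩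
  have hball : ball x' (ρ / 2) ⊆ ball x ρ := by
    intro y hy
    rw [mem_ball] at *
    linarith [dist_triangle y x' x]
  have hg : ∀ y ∈ ball x ρ, HasFDerivAt g (fderiv ℂ f y - fderiv ℂ f x) y := by
    intro y hy
    have := (hf.differentiableAt (hU.mem_nhds (hρx y hy).2)).hasFDerivAt.sub_const (f x) |>.sub
      ((fderiv ℂ f x).hasFDerivAt.comp y ((hasFDerivAt_id y).sub_const x))
    rwa [ContinuousLinearMap.comp_id] at this
  have hgbound : ∀ y ∈ ball x' (ρ / 2), ‖g y‖ ≤ ε / 8 * ρ := by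
    intro y hy
    refine ((hρx y (hball hy)).1).trans (mul_le_mul_of_nonneg_left ?_ (by positivity))
    rw [← dist_eq_norm]
    exact (mem_ball.1 (hball hy)).le
  rw [dist_eq_norm, ← (hg x' (hball (mem_ball_self (half_pos hρ)))).fderiv]
  calc ‖fderiv ℂ g x'‖ ≤ 2 * (ε / 8 * ρ) / (ρ / 2) :=
        norm_fderiv_le_of_forall_mem_ball_norm_le
          (fun y hy => (hg y (hball hy)).differentiableAt.differentiableWithinAt)
          (half_pos hρ) hgbound
    _ < ε := by field_simp; linarith

theorem continuousOn_comp_homothety {G : Type*} [TopologicalSpace G] {g : E → G} {a z : E}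
    (hg : ContinuousOn g U) (hseg : ∀ t ∈ Icc (0 : ℝ) 1, a + (t : ℂ) • (z - a) ∈ U) :
    ContinuousOn (fun t : ℝ => g (a + (t : ℂ) • (z - a))) (Icc 0 1) :=
  hg.comp (by fun_prop) fun t ht => hseg t ht

theorem dist_homothety_le {a z w : E} {t : ℝ} (ht : t ∈ Icc (0 : ℝ) 1) :
    dist (a + (t : ℂ) • (z - a)) (a + (t : ℂ) • (w - a)) ≤ dist z w := by
  rw [dist_add_left, dist_smul₀, dist_sub_right, Complex.norm_real, Real.norm_of_nonneg ht.1]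
  exact mul_le_of_le_one_left dist_nonneg ht.2

theorem hasFDerivAt_comp_homothety {a z : E} {c : ℂ}
    (hf : DifferentiableAt ℂ f (a + c • (z - a))) :
    HasFDerivAt (fun z => f (a + c • (z - a))) (c • fderiv ℂ f (a + c • (z - a))) z := by
  have := hf.hasFDerivAt.comp z (((hasFDerivAt_id z).sub_const a).const_smul c |>.const_add a)
  rwa [ContinuousLinearMap.comp_smul, ContinuousLinearMap.comp_id] at this

theorem hasFDerivAt_intervalIntegral_comp_homothety [CompleteSpace F] {a z₀ : E}
    (hU : IsOpen U) (hf : DifferentiableOn ℂ f U)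
    (hseg : ∀ t ∈ Icc (0 : ℝ) 1, a + (t : ℂ) • (z₀ - a) ∈ U) :
    HasFDerivAt (fun z => ∫ t in (0 : ℝ)..1, f (a + (t : ℂ) • (z - a)))
      (∫ t in (0 : ℝ)..1, (t : ℂ) • fderiv ℂ f (a + (t : ℂ) • (z₀ - a))) z₀ := by
  set K := (fun t : ℝ => a + (t : ℂ) • (z₀ - a)) '' Icc 0 1
  have hK : IsCompact K := isCompact_Icc.image (by fun_prop)
  have hf' := continuousOn_fderiv_of_isOpen hU hf
  obtain ⟨δ, hδ, C, hδU, hC⟩ := hK.exists_bound_on_cthickening_of_continuousOn hU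
    (by rintro _ ⟨t, ht, rfl⟩; exact hseg t ht) hf'
  have hnear : ∀ z ∈ ball z₀ δ, ∀ t ∈ Icc (0 : ℝ) 1, a + (t : ℂ) • (z - a) ∈ cthickening δ K :=
    fun z hz t ht => mem_cthickening_of_dist_le _ _ _ _ ⟨t, ht, rfl⟩
      ((dist_homothety_le ht).trans (mem_ball.1 hz).le)
  have hIoc : Ι (0 : ℝ) 1 ⊆ Icc 0 1 := by
    rw [uIoc_of_le zero_le_one]; exact Ioc_subset_Icc_self
  refine intervalIntegral.hasFDerivAt_integral_of_dominated_of_fderiv_le (μ := volume)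
    (F := fun z t => f (a + (t : ℂ) • (z - a)))
    (F' := fun z t => (t : ℂ) • fderiv ℂ f (a + (t : ℂ) • (z - a))) (bound := fun _ => C)
    (ball_mem_nhds z₀ hδ) ?_ ?_ ?_ ?_ intervalIntegrable_const ?_
  · filter_upwards [ball_mem_nhds z₀ hδ] with z hz
    exact ((continuousOn_comp_homothety hf.continuousOn fun t ht => hδU (hnear z hz t ht)).mono
      hIoc).aestronglyMeasurable measurableSet_uIoc
  · exact (continuousOn_comp_homothety hf.continuousOn hseg).intervalIntegrable_of_Icc zero_le_one
  · exact ((Complex.continuous_ofReal.continuousOn.smul (continuousOn_comp_homothety hf' hseg)).mono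
      hIoc).aestronglyMeasurable measurableSet_uIoc
  · refine Eventually.of_forall fun t ht z hz => ?_
    rw [norm_smul, Complex.norm_real, Real.norm_of_nonneg (hIoc ht).1]
    exact (mul_le_of_le_one_left (norm_nonneg _) (hIoc ht).2).trans (hC _ (hnear z hz t (hIoc ht)))
  · exact Eventually.of_forall fun t ht z hz => hasFDerivAt_comp_homothety
      (hf.differentiableAt (hU.mem_nhds (hδU (hnear z hz t (hIoc ht)))))
end

theorem stmt0_general (n : ℕ) (U : Set (Fin n → ℂ)) (hU : IsOpen U)
    (a : Fin n → ℂ)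
    (hstar : ∀ z ∈ U, ∀ t : ℝ, t ∈ Set.Icc (0 : ℝ) 1 → a + (t : ℂ) • (z - a) ∈ U)
    (f : (Fin n → ℂ) → ℂ) (hf : ∀ z ∈ U, DifferentiableAt ℂ f z)
    (F : Fin n → (Fin n → ℂ) → ℂ)
    (hF : ∀ j z, F j z = ∫ t in (0 : ℝ)..1, f (a + (t : ℂ) • (z - a)) * (z j - a j)) :
    ∀ z ∈ U, ∀ j : Fin n,
      DifferentiableAt ℂ (F j) z ∧
      (∀ k : Fin n, k ≠ j →
        fderiv ℂ (F j) z (Pi.single k 1) =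
          ∫ t in (0 : ℝ)..1,
            fderiv ℂ f (a + (t : ℂ) • (z - a)) (Pi.single k 1) * (t : ℂ) * (z j - a j)) ∧
      fderiv ℂ (F j) z (Pi.single j 1) =
        ∫ t in (0 : ℝ)..1,
          (fderiv ℂ f (a + (t : ℂ) • (z - a)) (Pi.single j 1) * (t : ℂ) * (z j - a j)
            + f (a + (t : ℂ) • (z - a))) := by
  intro z hz j
  have hfU : DifferentiableOn ℂ f U := fun w hw => (hf w hw).differentiableWithinAt
  have hf' := continuousOn_comp_homothety (continuousOn_fderiv_of_isOpen hU hfU) (hstar z hz)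
  have hf₀ := continuousOn_comp_homothety hfU.continuousOn (hstar z hz)
  set L := ∫ t in (0 : ℝ)..1, (t : ℂ) • fderiv ℂ f (a + (t : ℂ) • (z - a))
  have hFj : F j = fun w => (∫ t in (0 : ℝ)..1, f (a + (t : ℂ) • (w - a))) * (w j - a j) := by
    ext w
    rw [hF, intervalIntegral.integral_mul_const]
  have hFd : HasFDerivAt (F j) ((∫ t in (0 : ℝ)..1, f (a + (t : ℂ) • (z - a))) •
      ContinuousLinearMap.proj j + (z j - a j) • L) z :=
    hFj ▸ (hasFDerivAt_intervalIntegral_comp_homothety hU hfU (hstar z hz)).mul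
      ((ContinuousLinearMap.proj (R := ℂ) (φ := fun _ : Fin n => ℂ) j).hasFDerivAt.sub_const (a j))
  have hL_int : IntervalIntegrable (fun t : ℝ => (t : ℂ) • fderiv ℂ f (a + (t : ℂ) • (z - a)))
      volume 0 1 := ContinuousOn.intervalIntegrable_of_Icc zero_le_one (by fun_prop)
  have hL : ∀ v, (z j - a j) * L v =
      ∫ t in (0 : ℝ)..1, fderiv ℂ f (a + (t : ℂ) • (z - a)) v * (t : ℂ) * (z j - a j) := by
    intro v
    rw [ContinuousLinearMap.intervalIntegral_apply hL_int, ← intervalIntegral.integral_const_mul]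
    congr 1 with t
    rw [smul_apply, smul_eq_mul]
    ring
  refine ⟨hFd.differentiableAt, fun k hk => ?_, ?_⟩
  · rw [hFd.fderiv, ← hL, add_apply, smul_apply, smul_apply, ContinuousLinearMap.proj_apply,
      Pi.single_eq_of_ne hk.symm, smul_zero, zero_add, smul_eq_mul]
  · have hint : ContinuousOn (fun t : ℝ => fderiv ℂ f (a + (t : ℂ) • (z - a)) (Pi.single j 1) *
        (t : ℂ) * (z j - a j)) (Icc 0 1) := by fun_prop
    rw [hFd.fderiv, intervalIntegral.integral_add (hint.intervalIntegrable_of_Icc zero_le_one)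
      (hf₀.intervalIntegrable_of_Icc zero_le_one), ← hL, add_apply, smul_apply, smul_apply,
      ContinuousLinearMap.proj_apply, Pi.single_eq_same, smul_eq_mul, smul_eq_mul, mul_one,
      add_comm]

/-- Let `U ⊆ ℂⁿ` be open and star-shaped with respect to `a ∈ U`, and let
`f : U → ℂ` be holomorphic. For each `j` define `F j z = ∫ t in 0..1, f (a + t(z-a)) (z_j - a_j)`.
Then each `F j` is complex differentiable on `U` with the stated partial derivatives. -/
theorem stmt0 (n : ℕ) (U : Set (Fin n → ℂ)) (hU : IsOpen U)
    (a : Fin n → ℂ) (ha : a ∈ U)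
    (hstar : ∀ z ∈ U, ∀ t : ℝ, t ∈ Set.Icc (0 : ℝ) 1 → a + (t : ℂ) • (z - a) ∈ U)
    (f : (Fin n → ℂ) → ℂ) (hf : ∀ z ∈ U, DifferentiableAt ℂ f z)
    (F : Fin n → (Fin n → ℂ) → ℂ)
    (hF : ∀ j z, F j z = ∫ t in (0 : ℝ)..1, f (a + (t : ℂ) • (z - a)) * (z j - a j)) :
    ∀ z ∈ U, ∀ j : Fin n,
      DifferentiableAt ℂ (F j) z ∧
      (∀ k : Fin n, k ≠ j →
        fderiv ℂ (F j) z (Pi.single k 1) =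
          ∫ t in (0 : ℝ)..1,
            fderiv ℂ f (a + (t : ℂ) • (z - a)) (Pi.single k 1) * (t : ℂ) * (z j - a j)) ∧
      fderiv ℂ (F j) z (Pi.single j 1) =
        ∫ t in (0 : ℝ)..1,
          (fderiv ℂ f (a + (t : ℂ) • (z - a)) (Pi.single j 1) * (t : ℂ) * (z j - a j)
            + f (a + (t : ℂ) • (z - a))) :=
  stmt0_general n U hU a hstar f hf F hF
end

section
/- Let U ⊆ ℂⁿ be an open set that is star-shaped with respect to a point a ∈ U, and let F = (F₁,…,Fₙ) : U → ℂⁿ be holomorphic. Then ∂F_j/∂z_k(z) = ∂F_k/∂z_j(z) for all z ∈ U and all j,k ∈ {1,…,n} if and only if there exists a holomorphic function g : U → ℂ with g(a) = 0 whose differential satisfies ∂g/∂z_j = F_j on U for every j = 1,…,n. -/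
/-!
The form `ω = ∑ⱼ Fⱼ dzⱼ` is closed exactly when `∂F_j/∂z_k = ∂F_k/∂z_j`. If `ω = dg`, then
closedness is the symmetry of the second derivative of `g`. Conversely, for a closed form,
`g(z) = ∫_{[a, z]} ω` is a primitive: for `w` near `z`, the triangle with vertices `a`, `z`, `w`
lies in the star-shaped set `U`, the integral of the closed form `ω` around its boundary vanishes,
so `g w = g z + ∫_{[z, w]} ω`, whose derivative at `w = z` is `ω z`.
-/

open Metric Set Filter Topology

section StarConvex

variable {𝕜 E F : Type*} [RCLike 𝕜] [NormedAddCommGroup E] [NormedSpace ℝ E] [NormedSpace 𝕜 E]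
  [NormedAddCommGroup F] [NormedSpace ℝ F] [NormedSpace 𝕜 F] [CompleteSpace F]
  {a b c : E} {s : Set E} {ω : E → E →L[𝕜] F} {dω : E → E →L[ℝ] E →L[𝕜] F}

theorem StarConvex.convexHull_insert_pair_subset (hs : StarConvex ℝ a s)
    (hbc : segment ℝ b c ⊆ s) : convexHull ℝ {a, b, c} ⊆ s := by
  rw [convexHull_insert (insert_nonempty b {c}), convexHull_pair, convexJoin_singleton_left]
  exact iUnion₂_subset fun x hx => hs.segment_subset (hbc hx)

theorem StarConvex.hasFDerivAt_curveIntegral_segment_of_hasFDerivAt_symmetric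
    (hs : StarConvex ℝ a s) (hso : IsOpen s) (hω : ∀ x ∈ s, HasFDerivAt ω (dω x) x)
    (hdω : ∀ x ∈ s, ∀ u v, dω x u v = dω x v u) (hb : b ∈ s) :
    HasFDerivAt (∫ᶜ x in .segment a ·, ω x) (ω b) b := by
  obtain ⟨r, hr, hrs⟩ := Metric.isOpen_iff.mp hso b hb
  have hcont : ∀ᶠ x in 𝓝 b, ContinuousAt ω x :=
    eventually_of_mem (hso.mem_nhds hb) fun x hx => (hω x hx).continuousAt
  refine (HasFDerivAt.curveIntegral_segment_source' hcont).const_add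
    (∫ᶜ x in .segment a b, ω x) |>.congr_of_eventuallyEq ?_
  filter_upwards [ball_mem_nhds b hr] with y hy
  have hT := hs.convexHull_insert_pair_subset
    (((convex_ball b r).segment_subset (mem_ball_self hr) hy).trans hrs)
  refine ((convex_convexHull ℝ _).curveIntegral_segment_add_eq_of_hasFDerivWithinAt_symmetric
    (fun x hx => (hω x (hT hx)).hasFDerivWithinAt) (fun x hx u _ v _ => hdω x (hT hx) u v)
    ?_ ?_ ?_).symm
  all_goals exact subset_convexHull ℝ _ (by simp)

theorem StarConvex.exists_forall_hasFDerivAt_of_hasFDerivAt_symmetric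
    (hs : StarConvex ℝ a s) (hso : IsOpen s) (hω : ∀ x ∈ s, HasFDerivAt ω (dω x) x)
    (hdω : ∀ x ∈ s, ∀ u v, dω x u v = dω x v u) :
    ∃ f : E → F, f a = 0 ∧ ∀ x ∈ s, HasFDerivAt f (ω x) x :=
  ⟨(∫ᶜ x in .segment a ·, ω x), by simp [Path.segment_same],
    fun _ hx => hs.hasFDerivAt_curveIntegral_segment_of_hasFDerivAt_symmetric hso hω hdω hx⟩

end StarConvex

namespace ContinuousLinearMap

variable {𝕜 M ι : Type*} [NontriviallyNormedField 𝕜] [NormedAddCommGroup M] [NormedSpace 𝕜 M]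
  [Fintype ι] [DecidableEq ι]

theorem ext_pi_single {f g : (ι → 𝕜) →L[𝕜] M} (h : ∀ i, f (Pi.single i 1) = g (Pi.single i 1)) :
    f = g :=
  coe_injective <| (Pi.basisFun 𝕜 ι).ext fun i => by simpa using h i

theorem forall_apply_comm_iff_single {B : (ι → 𝕜) →L[𝕜] (ι → 𝕜) →L[𝕜] M} :
    (∀ u v, B u v = B v u) ↔
      ∀ i j, B (Pi.single i 1) (Pi.single j 1) = B (Pi.single j 1) (Pi.single i 1) := by
  refine ⟨fun h i j => h _ _, fun h u v => ?_⟩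
  suffices B = B.flip from congr($this u v)
  exact ext_pi_single fun i => ext_pi_single fun j => h i j

end ContinuousLinearMap

section CoordOneForm

open ContinuousLinearMap

variable {𝕜 : Type*} [NontriviallyNormedField 𝕜] {n : ℕ} {F : (Fin n → 𝕜) → Fin n → 𝕜}
  {z : Fin n → 𝕜}

noncomputable def coordOneForm (F : (Fin n → 𝕜) → Fin n → 𝕜) (z : Fin n → 𝕜) :
    (Fin n → 𝕜) →L[𝕜] 𝕜 :=
  ∑ j, F z j • proj j

theorem coordOneForm_apply_single (j : Fin n) : coordOneForm F z (Pi.single j 1) = F z j := by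
  simp [coordOneForm, Pi.single_apply]

theorem eq_coordOneForm_iff {L : (Fin n → 𝕜) →L[𝕜] 𝕜} :
    L = coordOneForm F z ↔ ∀ j, L (Pi.single j 1) = F z j := by
  refine ⟨fun h j => h ▸ coordOneForm_apply_single j, fun h => ext_pi_single fun j => ?_⟩
  rw [h, coordOneForm_apply_single]

theorem hasFDerivAt_coordOneForm (hF : DifferentiableAt 𝕜 F z) :
    HasFDerivAt (coordOneForm F)
      (∑ j, (fderiv 𝕜 (fun w => F w j) z).smulRight (proj j : (Fin n → 𝕜) →L[𝕜] 𝕜)) z :=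
  HasFDerivAt.fun_sum fun j _ =>
    (differentiableAt_pi.1 hF j).hasFDerivAt.smul_const (proj j : (Fin n → 𝕜) →L[𝕜] 𝕜)

theorem fderiv_coordOneForm_apply_single (hF : DifferentiableAt 𝕜 F z) (u : Fin n → 𝕜)
    (j : Fin n) :
    fderiv 𝕜 (coordOneForm F) z u (Pi.single j 1) = fderiv 𝕜 (fun w => F w j) z u := by
  simp [(hasFDerivAt_coordOneForm hF).fderiv, Pi.single_apply]

theorem fderiv_coordOneForm_comm_iff (hF : DifferentiableAt 𝕜 F z) :
    (∀ u v, fderiv 𝕜 (coordOneForm F) z u v = fderiv 𝕜 (coordOneForm F) z v u) ↔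
      ∀ j k, fderiv 𝕜 (fun w => F w j) z (Pi.single k 1) =
        fderiv 𝕜 (fun w => F w k) z (Pi.single j 1) := by
  simp only [forall_apply_comm_iff_single, fderiv_coordOneForm_apply_single hF]
  exact forall_comm

end CoordOneForm

theorem stmt1_general (n : ℕ) (U : Set (Fin n → ℂ)) (hU : IsOpen U)
    (a : Fin n → ℂ)
    (hstar : ∀ z ∈ U, ∀ t : ℝ, t ∈ Set.Icc (0 : ℝ) 1 → a + (t : ℂ) • (z - a) ∈ U)
    (F : (Fin n → ℂ) → (Fin n → ℂ)) (hF : ∀ z ∈ U, DifferentiableAt ℂ F z) :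
    (∀ z ∈ U, ∀ j k : Fin n,
        fderiv ℂ (fun w => F w j) z (Pi.single k 1) =
          fderiv ℂ (fun w => F w k) z (Pi.single j 1)) ↔
    (∃ g : (Fin n → ℂ) → ℂ,
        (∀ z ∈ U, DifferentiableAt ℂ g z) ∧ g a = 0 ∧
        ∀ z ∈ U, ∀ j : Fin n, fderiv ℂ g z (Pi.single j 1) = F z j) := by
  have hU_star : StarConvex ℝ a U := fun z hz s t _ ht hst => by
    convert hstar z hz t ⟨ht, by linarith⟩ using 1
    obtain rfl : s = 1 - t := by linarith
    rw [Complex.coe_smul, smul_sub, sub_smul, one_smul]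
    abel
  have hω (z) (hz : z ∈ U) := hasFDerivAt_coordOneForm (hF z hz)
  constructor
  · intro hsymm
    obtain ⟨g, hga, hg⟩ := hU_star.exists_forall_hasFDerivAt_of_hasFDerivAt_symmetric hU
      (fun z hz => (hω z hz).restrictScalars ℝ)
      (fun z hz => (hω z hz).fderiv ▸ (fderiv_coordOneForm_comm_iff (hF z hz)).2 (hsymm z hz))
    exact ⟨g, fun z hz => (hg z hz).differentiableAt, hga,
      fun z hz => eq_coordOneForm_iff.1 (hg z hz).fderiv⟩
  · rintro ⟨g, hg, -, hgF⟩ z hz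
    have hdg : ∀ᶠ y in 𝓝 z, HasFDerivAt g (coordOneForm F y) y :=
      eventually_of_mem (hU.mem_nhds hz) fun y hy =>
        eq_coordOneForm_iff.2 (hgF y hy) ▸ (hg y hy).hasFDerivAt
    exact (fderiv_coordOneForm_comm_iff (hF z hz)).1 <|
      (hω z hz).fderiv ▸ second_derivative_symmetric_of_eventually hdg (hω z hz)

/-- complex Poincaré lemma on star-shaped domains. Let `U ⊆ ℂⁿ` be open and
star-shaped with respect to `a ∈ U`, and let `F : U → ℂⁿ` be holomorphic. Then
`∂F_j/∂z_k = ∂F_k/∂z_j` on `U` for all `j, k` iff there is a holomorphic `g : U → ℂ` with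
`g a = 0` and `dg = F` on `U`. -/
theorem stmt1 (n : ℕ) (U : Set (Fin n → ℂ)) (hU : IsOpen U)
    (a : Fin n → ℂ) (ha : a ∈ U)
    (hstar : ∀ z ∈ U, ∀ t : ℝ, t ∈ Set.Icc (0 : ℝ) 1 → a + (t : ℂ) • (z - a) ∈ U)
    (F : (Fin n → ℂ) → (Fin n → ℂ)) (hF : ∀ z ∈ U, DifferentiableAt ℂ F z) :
    (∀ z ∈ U, ∀ j k : Fin n,
        fderiv ℂ (fun w => F w j) z (Pi.single k 1) =
          fderiv ℂ (fun w => F w k) z (Pi.single j 1)) ↔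
    (∃ g : (Fin n → ℂ) → ℂ,
        (∀ z ∈ U, DifferentiableAt ℂ g z) ∧ g a = 0 ∧
        ∀ z ∈ U, ∀ j : Fin n, fderiv ℂ g z (Pi.single j 1) = F z j) :=
  stmt1_general n U hU a hstar F hF
end

section
/- Let B be the open bidisk, i.e. the open unit ball of ℂ² with the sup norm. Let g, h : 𝔻 → ℂ be bounded holomorphic functions on the open unit disk 𝔻 such that the derivative g′ is unbounded on 𝔻, and define F₁ : B → ℂ by F₁(z₁, z₂) = h(z₁) + g(z₂). Then F₁ is bounded and holomorphic on B, but there exists no bounded holomorphic function F₂ : B → ℂ satisfying ∂F₂/∂z₁(z₁,z₂) = ∂F₁/∂z₂(z₁,z₂) for all (z₁,z₂) ∈ B. -/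
/-!
If `∂F₂/∂z₁ = ∂F₁/∂z₂ = g'(z₂)`, then for fixed `z₂` the slice `z₁ ↦ F₂ (z₁, z₂)` is affine with
slope `g'(z₂)`. Hence `g'(z₂) = F₂ (1/2, z₂) - F₂ (-1/2, z₂)` is bounded by twice a bound of `F₂`,
contradicting the unboundedness of `g'`.
-/

open Metric

theorem Prod.mem_ball_zero_iff {α β : Type*} [SeminormedAddCommGroup α] [SeminormedAddCommGroup β]
    {p : α × β} {r : ℝ} : p ∈ ball (0 : α × β) r ↔ p.1 ∈ ball 0 r ∧ p.2 ∈ ball 0 r := by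
  rw [← Prod.mk_zero_zero, ← ball_prod_same]
  rfl

section
variable {𝕜 E G : Type*} [NontriviallyNormedField 𝕜] [NormedAddCommGroup E] [NormedSpace 𝕜 E]
  [NormedAddCommGroup G] [NormedSpace 𝕜 G]

theorem DifferentiableAt.hasDerivAt_comp_prodMk_left {F : 𝕜 × E → G} {z : 𝕜} {w : E}
    (hF : DifferentiableAt 𝕜 F (z, w)) :
    HasDerivAt (fun z => F (z, w)) (fderiv 𝕜 F (z, w) (1, 0)) z :=
  hF.hasFDerivAt.comp_hasDerivAt z ((hasDerivAt_id z).prodMk (hasDerivAt_const z w))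

theorem DifferentiableAt.hasDerivAt_comp_prodMk_right {F : E × 𝕜 → G} {z : E} {w : 𝕜}
    (hF : DifferentiableAt 𝕜 F (z, w)) :
    HasDerivAt (fun w => F (z, w)) (fderiv 𝕜 F (z, w) (0, 1)) w :=
  hF.hasFDerivAt.comp_hasDerivAt w ((hasDerivAt_const w z).prodMk (hasDerivAt_id w))

theorem DifferentiableOn.comp_fst_add_comp_snd {h g : E → G} {s t : Set E}
    (hh : DifferentiableOn 𝕜 h s) (hg : DifferentiableOn 𝕜 g t) :
    DifferentiableOn 𝕜 (fun p : E × E => h p.1 + g p.2) (s ×ˢ t) :=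
  (hh.comp differentiableOn_fst fun _ hp => hp.1).add
    (hg.comp differentiableOn_snd fun _ hp => hp.2)
end

section
variable {𝕜 E : Type*} [RCLike 𝕜] [NormedAddCommGroup E] [NormedSpace 𝕜 E]

theorem Convex.sub_eq_smul_of_hasDerivWithinAt_const {f : 𝕜 → E} {c : E} {s : Set 𝕜}
    (hs : Convex ℝ s) (hf : ∀ z ∈ s, HasDerivWithinAt f c s z) {x y : 𝕜} (hx : x ∈ s)
    (hy : y ∈ s) : f y - f x = (y - x) • c := by
  have hg : ∀ z ∈ s, HasDerivWithinAt (fun z => f z - z • c) 0 s z := fun z hz => by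
    simpa using (hf z hz).fun_sub ((hasDerivWithinAt_id z s).smul_const c)
  have := hs.norm_image_sub_le_of_norm_hasDerivWithin_le hg (fun _ _ => norm_zero.le) hx hy
  rw [zero_mul, norm_le_zero_iff, sub_sub_sub_comm, sub_eq_zero, ← sub_smul] at this
  exact this

theorem norm_mul_le_of_hasDerivAt_const {f : 𝕜 → E} {c : E} {r C : ℝ} (hr : 0 < r)
    (hf : ∀ z ∈ ball (0 : 𝕜) r, HasDerivAt f c z) (hC : ∀ z ∈ ball (0 : 𝕜) r, ‖f z‖ ≤ C) :
    r * ‖c‖ ≤ 2 * C := by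
  have hmem : ∀ z : 𝕜, ‖z‖ = r / 2 → z ∈ ball (0 : 𝕜) r := fun z hz => by
    rw [mem_ball_zero_iff, hz]; linarith
  have hpos : ((r / 2 : ℝ) : 𝕜) ∈ ball (0 : 𝕜) r := hmem _ (by simp [abs_of_pos hr])
  have hneg : -((r / 2 : ℝ) : 𝕜) ∈ ball (0 : 𝕜) r := hmem _ (by simp [abs_of_pos hr])
  have hdiff := (convex_ball (0 : 𝕜) r).sub_eq_smul_of_hasDerivWithinAt_const
    (fun z hz => (hf z hz).hasDerivWithinAt) hneg hpos
  calc r * ‖c‖ = ‖f ((r / 2 : ℝ) : 𝕜) - f (-((r / 2 : ℝ) : 𝕜))‖ := by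
        rw [hdiff, sub_neg_eq_add, ← RCLike.ofReal_add, add_halves, norm_smul, RCLike.norm_ofReal,
          abs_of_pos hr]
    _ ≤ ‖f ((r / 2 : ℝ) : 𝕜)‖ + ‖f (-((r / 2 : ℝ) : 𝕜))‖ := norm_sub_le _ _
    _ ≤ 2 * C := by linarith [hC _ hpos, hC _ hneg]
end

/-- Let `B` be the open bidisk (unit ball of `ℂ²` with the sup norm, here
`ℂ × ℂ` with its max norm).  If `g, h ∈ 𝓗^∞(𝔻)` with `g'` unbounded on `𝔻`, and
`F₁(z₁,z₂) = h z₁ + g z₂`, then `F₁` is bounded and holomorphic on `B`, but there is no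
bounded holomorphic `F₂ : B → ℂ` with `∂F₂/∂z₁ = ∂F₁/∂z₂` on `B`. -/
theorem stmt3 (g h : ℂ → ℂ)
    (hg : DifferentiableOn ℂ g (Metric.ball (0 : ℂ) 1))
    (hgb : ∃ C : ℝ, ∀ z ∈ Metric.ball (0 : ℂ) 1, ‖g z‖ ≤ C)
    (hh : DifferentiableOn ℂ h (Metric.ball (0 : ℂ) 1))
    (hhb : ∃ C : ℝ, ∀ z ∈ Metric.ball (0 : ℂ) 1, ‖h z‖ ≤ C)
    (hg' : ¬ ∃ C : ℝ, ∀ z ∈ Metric.ball (0 : ℂ) 1, ‖deriv g z‖ ≤ C)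
    (F₁ : ℂ × ℂ → ℂ) (hF₁ : ∀ p : ℂ × ℂ, F₁ p = h p.1 + g p.2) :
    (DifferentiableOn ℂ F₁ (Metric.ball (0 : ℂ × ℂ) 1) ∧
      ∃ C : ℝ, ∀ p ∈ Metric.ball (0 : ℂ × ℂ) 1, ‖F₁ p‖ ≤ C) ∧
    ¬ ∃ F₂ : ℂ × ℂ → ℂ,
        DifferentiableOn ℂ F₂ (Metric.ball (0 : ℂ × ℂ) 1) ∧
        (∃ C : ℝ, ∀ p ∈ Metric.ball (0 : ℂ × ℂ) 1, ‖F₂ p‖ ≤ C) ∧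
        ∀ p ∈ Metric.ball (0 : ℂ × ℂ) 1,
          fderiv ℂ F₂ p (1, 0) = fderiv ℂ F₁ p (0, 1) := by
  obtain rfl : F₁ = fun p => h p.1 + g p.2 := funext hF₁
  have hB : IsOpen (ball (0 : ℂ × ℂ) 1) := isOpen_ball
  have hF₁d : DifferentiableOn ℂ (fun p : ℂ × ℂ => h p.1 + g p.2) (ball 0 1) := by
    rw [← Prod.mk_zero_zero, ← ball_prod_same]
    exact hh.comp_fst_add_comp_snd hg
  have hF₁' : ∀ z w, (z, w) ∈ ball (0 : ℂ × ℂ) 1 →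
      fderiv ℂ (fun p : ℂ × ℂ => h p.1 + g p.2) (z, w) (0, 1) = deriv g w := fun z w hp =>
    have hgw := hg.differentiableAt (isOpen_ball.mem_nhds (Prod.mem_ball_zero_iff.1 hp).2)
    (hF₁d.differentiableAt (hB.mem_nhds hp)).hasDerivAt_comp_prodMk_right.unique
      (hgw.hasDerivAt.const_add (h z))
  obtain ⟨Ch, hCh⟩ := hhb
  obtain ⟨Cg, hCg⟩ := hgb
  refine ⟨⟨hF₁d, Ch + Cg, fun p hp => ?_⟩, ?_⟩
  · have hp' := Prod.mem_ball_zero_iff.1 hp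
    exact (norm_add_le _ _).trans (add_le_add (hCh _ hp'.1) (hCg _ hp'.2))
  rintro ⟨F₂, hF₂d, ⟨C, hC⟩, hF₂'⟩
  refine hg' ⟨2 * C, fun w hw => ?_⟩
  have hslice : ∀ z ∈ ball (0 : ℂ) 1, HasDerivAt (fun z => F₂ (z, w)) (deriv g w) z := by
    intro z hz
    have hp : (z, w) ∈ ball (0 : ℂ × ℂ) 1 := Prod.mem_ball_zero_iff.2 ⟨hz, hw⟩
    rw [← hF₁' z w hp, ← hF₂' _ hp]
    exact (hF₂d.differentiableAt (hB.mem_nhds hp)).hasDerivAt_comp_prodMk_left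
  simpa using norm_mul_le_of_hasDerivAt_const one_pos hslice
    fun z hz => hC _ (Prod.mem_ball_zero_iff.2 ⟨hz, hw⟩)
end

section
/- Let X be a complex Banach space, m ≥ 2, and Q ∈ 𝓟(^{m−1}X, X*). Then Q = dP for some P ∈ 𝓟(^m X) if and only if y∘d(x∘Q) = x∘d(y∘Q) as elements of 𝓟(^{m−2}X), for all x, y ∈ X. -/
/-!
Since `dP(u)(x) = m P̌(u,…,u,x)`, `Q` is a differential exactly when its symmetric
`(m-1)`-linear map `Q̌`, uncurried to `(v₁,…,v_{m-1},x) ↦ Q̌(v)(x)`, is symmetric in all `m`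
arguments; `P` is then that `m`-linear map divided by `m`. Differentiating `u ↦ Q(u)(x)` in the
direction `y` gives `(m-1) Q̌(u,…,u,y)(x)`, so the condition says that the last two arguments
can be exchanged when the first `m-2` are equal. Polarization (a symmetric multilinear map is
determined by its values on the diagonal) removes that restriction, and since adjacent
transpositions generate the symmetric group, full symmetry follows.
-/

open Fin Function Equiv

namespace Fin

variable {α : Type*} {n : ℕ}

lemma snoc_comp_permCongr_optionCongr (σ : Perm (Fin n)) (v : Fin n → α) (x : α) :
    (snoc v x : Fin (n + 1) → α) ∘ finSuccEquivLast.symm.permCongr (optionCongr σ) =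
      snoc (v ∘ σ) x := by
  funext j
  induction j using Fin.lastCases <;>
    simp [Equiv.permCongr_apply, finSuccEquivLast_castSucc, finSuccEquivLast_symm_some]

lemma snoc_comp_swap_castSucc (v : Fin n → α) (x : α) (a b : Fin n) :
    (snoc v x : Fin (n + 1) → α) ∘ swap a.castSucc b.castSucc = snoc (v ∘ swap a b) x := by
  funext j
  induction j using Fin.lastCases with
  | last => simp [swap_apply_of_ne_of_ne (castSucc_lt_last a).ne' (castSucc_lt_last b).ne']
  | cast j => simp [(castSucc_injective n).swap_apply]

lemma snoc_snoc_comp_swap_last (v : Fin n → α) (x y : α) :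
    (snoc (snoc v x) y : Fin (n + 2) → α) ∘ swap (last n).castSucc (last (n + 1)) =
      snoc (snoc v y) x := by
  funext j
  induction j using Fin.lastCases with
  | last => simp
  | cast j =>
    induction j using Fin.lastCases with
    | last => simp
    | cast j =>
      rw [comp_apply, swap_apply_of_ne_of_ne (by simp [castSucc_inj, (castSucc_lt_last j).ne])
        (castSucc_lt_last _).ne]
      simp

lemma update_const_comp_swap_last (u x : α) (i : Fin (n + 1)) :
    update (fun _ => u) i x ∘ swap i (last n) = snoc (fun _ : Fin n => u) x := by
  rw [update_comp_equiv, Equiv.symm_swap, swap_apply_left]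
  funext j
  induction j using Fin.lastCases <;> simp

end Fin

namespace ContinuousMultilinearMap

variable {𝕜 : Type*} [NontriviallyNormedField 𝕜]
  {E F : Type*} [NormedAddCommGroup E] [NormedSpace 𝕜 E] [NormedAddCommGroup F] [NormedSpace 𝕜 F]

def IsSymm {ι : Type*} [Fintype ι] (f : ContinuousMultilinearMap 𝕜 (fun _ : ι => E) F) : Prop :=
  ∀ (σ : Perm ι) (v : ι → E), f (v ∘ σ) = f v

lemma IsSymm.smul {ι : Type*} [Fintype ι] {f : ContinuousMultilinearMap 𝕜 (fun _ : ι => E) F}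
    (hf : f.IsSymm) (c : 𝕜) : (c • f).IsSymm := fun σ v => by
  simp only [smul_apply, hf σ v]

lemma IsSymm.of_comp_swap_castSucc_succ {n : ℕ}
    {f : ContinuousMultilinearMap 𝕜 (fun _ : Fin (n + 1) => E) F}
    (h : ∀ (i : Fin n) (v : Fin (n + 1) → E), f (v ∘ swap i.castSucc i.succ) = f v) :
    f.IsSymm := by
  intro σ
  induction (Perm.mclosure_swap_castSucc_succ n).ge (Submonoid.mem_top σ)
    using Submonoid.closure_induction with
  | mem _ hσ => obtain ⟨i, rfl⟩ := hσ; exact h i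
  | one => intro v; rfl
  | mul σ τ _ _ hσ hτ => intro v; rw [Perm.coe_mul, ← comp_assoc, hτ, hσ]

noncomputable def evalLast {n : ℕ} (f : ContinuousMultilinearMap 𝕜 (fun _ : Fin (n + 1) => E) F)
    (x : E) : ContinuousMultilinearMap 𝕜 (fun _ : Fin n => E) F :=
  (ContinuousLinearMap.apply 𝕜 F x).compContinuousMultilinearMap f.curryRight

@[simp]
lemma evalLast_apply {n : ℕ} (f : ContinuousMultilinearMap 𝕜 (fun _ : Fin (n + 1) => E) F)
    (x : E) (v : Fin n → E) : f.evalLast x v = f (snoc v x) := by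
  simp [evalLast]

lemma IsSymm.evalLast {n : ℕ} {f : ContinuousMultilinearMap 𝕜 (fun _ : Fin (n + 1) => E) F}
    (hf : f.IsSymm) (x : E) : (f.evalLast x).IsSymm := fun σ v => by
  simp only [evalLast_apply, ← snoc_comp_permCongr_optionCongr, hf _ _]

lemma IsSymm.compContinuousMultilinearMap {ι G : Type*} [Fintype ι] [NormedAddCommGroup G]
    [NormedSpace 𝕜 G] {f : ContinuousMultilinearMap 𝕜 (fun _ : ι => E) F} (hf : f.IsSymm)
    (g : F →L[𝕜] G) : (g.compContinuousMultilinearMap f).IsSymm := fun σ v => by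
  simp only [ContinuousLinearMap.compContinuousMultilinearMap_coe, comp_apply, hf σ v]

lemma isSymm_uncurryRight {n : ℕ}
    {Q : ContinuousMultilinearMap 𝕜 (fun _ : Fin (n + 1) => E) (E →L[𝕜] F)} (hQ : Q.IsSymm)
    (hexch : ∀ (v : Fin n → E) (x y : E), Q (snoc v x) y = Q (snoc v y) x) :
    Q.uncurryRight.IsSymm := by
  refine IsSymm.of_comp_swap_castSucc_succ fun i w => ?_
  obtain ⟨v, x, y, rfl⟩ : ∃ v x y, w = snoc (snoc v x) y :=
    ⟨init (init w), init w (last n), w (last (n + 1)), by rw [snoc_init_self, snoc_init_self]⟩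
  induction i using Fin.lastCases with
  | last =>
    rw [succ_last, snoc_snoc_comp_swap_last]
    simp only [uncurryRight_apply, init_snoc, snoc_last, hexch v x y]
  | cast i =>
    rw [succ_castSucc, snoc_comp_swap_castSucc]
    simp only [uncurryRight_apply, init_snoc, snoc_last, hQ _ _]

lemma hasFDerivAt_diag {n : ℕ} (f : ContinuousMultilinearMap 𝕜 (fun _ : Fin n => E) F) (u : E) :
    HasFDerivAt (fun v : E => f fun _ => v)
      ((f.linearDeriv fun _ => u).comp (ContinuousLinearMap.pi fun _ => .id 𝕜 E)) u :=
  (f.hasFDerivAt _).comp u (ContinuousLinearMap.pi fun _ => .id 𝕜 E).hasFDerivAt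

lemma IsSymm.fderiv_diag_apply {n : ℕ}
    {f : ContinuousMultilinearMap 𝕜 (fun _ : Fin (n + 1) => E) F} (hf : f.IsSymm) (u x : E) :
    fderiv 𝕜 (fun v : E => f fun _ => v) u x = (n + 1 : 𝕜) • f (snoc (fun _ => u) x) := by
  have hterm (i : Fin (n + 1)) : f (update (fun _ => u) i x) = f (snoc (fun _ => u) x) := by
    rw [← hf (swap i (last n)), update_const_comp_swap_last]
  simp [(hasFDerivAt_diag f u).fderiv, linearDeriv_apply, hterm, ← Nat.cast_smul_eq_nsmul 𝕜]

lemma IsSymm.fderiv_diag_apply_apply {n : ℕ}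
    {Q : ContinuousMultilinearMap 𝕜 (fun _ : Fin (n + 1) => E) (E →L[𝕜] F)} (hQ : Q.IsSymm)
    (u x y : E) :
    fderiv 𝕜 (fun v : E => Q (fun _ => v) x) u y = (n + 1 : 𝕜) • Q (snoc (fun _ => u) y) x :=
  (hQ.compContinuousMultilinearMap (ContinuousLinearMap.apply 𝕜 F x)).fderiv_diag_apply u y

variable [CharZero 𝕜]

lemma IsSymm.ext_diag {n : ℕ} {f g : ContinuousMultilinearMap 𝕜 (fun _ : Fin n => E) F}
    (hf : f.IsSymm) (hg : g.IsSymm) (h : ∀ u : E, f (fun _ => u) = g fun _ => u) : f = g := by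
  induction n with
  | zero =>
    ext v
    obtain rfl : v = fun _ => 0 := Subsingleton.elim _ _
    exact h 0
  | succ n ih =>
    -- differentiating the diagonal in the direction `x` yields the diagonal of `evalLast x`
    have hlast (x : E) : f.evalLast x = g.evalLast x := by
      refine ih (hf.evalLast x) (hg.evalLast x) fun u => ?_
      have hd := congrArg (fun φ : E → F => fderiv 𝕜 φ u x) (funext h)
      simp only [hf.fderiv_diag_apply, hg.fderiv_diag_apply] at hd
      simpa using smul_right_injective F n.cast_add_one_ne_zero hd
    ext v
    rw [← snoc_init_self v, ← evalLast_apply, hlast, evalLast_apply]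

lemma IsSymm.snoc_apply_comm {n : ℕ}
    {Q : ContinuousMultilinearMap 𝕜 (fun _ : Fin (n + 1) => E) (E →L[𝕜] F)} (hQ : Q.IsSymm)
    (h : ∀ u x y : E, Q (snoc (fun _ => u) x) y = Q (snoc (fun _ => u) y) x)
    (v : Fin n → E) (x y : E) : Q (snoc v x) y = Q (snoc v y) x := by
  have := IsSymm.ext_diag ((hQ.compContinuousMultilinearMap (.apply 𝕜 F y)).evalLast x)
    ((hQ.compContinuousMultilinearMap (.apply 𝕜 F x)).evalLast y) fun u => by simp [h u x y]
  simpa using congr($this v)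

lemma IsSymm.apply_eq_smul_snoc {n : ℕ}
    {Q : ContinuousMultilinearMap 𝕜 (fun _ : Fin (n + 1) => E) (E →L[𝕜] F)} (hQ : Q.IsSymm)
    {P : ContinuousMultilinearMap 𝕜 (fun _ : Fin (n + 2) => E) F} (hP : P.IsSymm)
    (hPQ : ∀ u x : E, Q (fun _ => u) x = fderiv 𝕜 (fun v : E => P fun _ => v) u x)
    (v : Fin (n + 1) → E) (x : E) : Q v x = (n + 2 : 𝕜) • P (snoc v x) := by
  have := IsSymm.ext_diag (hQ.compContinuousMultilinearMap (.apply 𝕜 F x))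
    ((hP.evalLast x).smul (n + 2 : 𝕜)) fun u => by
      simp only [ContinuousLinearMap.compContinuousMultilinearMap_coe, comp_apply,
        ContinuousLinearMap.apply_apply, hPQ, hP.fderiv_diag_apply, smul_apply, evalLast_apply]
      congr 1
      push_cast
      ring
  simpa using congr($this v)

end ContinuousMultilinearMap

open ContinuousMultilinearMap in
theorem stmt5_general (X : Type*) [NormedAddCommGroup X] [NormedSpace ℂ X] (k : ℕ)
    (Q : ContinuousMultilinearMap ℂ (fun _ : Fin (k + 1) => X) (X →L[ℂ] ℂ))
    (hQ : ∀ (σ : Equiv.Perm (Fin (k + 1))) (v : Fin (k + 1) → X), Q (v ∘ σ) = Q v) :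
    (∃ P : ContinuousMultilinearMap ℂ (fun _ : Fin (k + 2) => X) ℂ,
        (∀ (σ : Equiv.Perm (Fin (k + 2))) (v : Fin (k + 2) → X), P (v ∘ σ) = P v) ∧
        ∀ u x : X, Q (fun _ => u) x = fderiv ℂ (fun v : X => P fun _ => v) u x) ↔
    (∀ x y : X,
        (fun u : X => fderiv ℂ (fun v : X => Q (fun _ => v) x) u y) =
          fun u : X => fderiv ℂ (fun v : X => Q (fun _ => v) y) u x) := by
  replace hQ : Q.IsSymm := hQ
  constructor
  · rintro ⟨P, hP, hPQ⟩ x y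
    funext u
    rw [hQ.fderiv_diag_apply_apply, hQ.fderiv_diag_apply_apply,
      hQ.apply_eq_smul_snoc hP hPQ, hQ.apply_eq_smul_snoc hP hPQ, ← snoc_snoc_comp_swap_last, hP]
  · intro h
    have hexch := hQ.snoc_apply_comm fun u x y => by
      have := congrFun (h y x) u
      rw [hQ.fderiv_diag_apply_apply, hQ.fderiv_diag_apply_apply] at this
      exact smul_right_injective ℂ k.cast_add_one_ne_zero this
    have hP := (isSymm_uncurryRight hQ hexch).smul (k + 2 : ℂ)⁻¹
    refine ⟨_, hP, fun u x => ?_⟩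
    rw [hP.fderiv_diag_apply, smul_apply, uncurryRight_apply, init_snoc, snoc_last, smul_smul,
      show ((k + 1 : ℕ) : ℂ) + 1 = k + 2 by push_cast; ring, mul_inv_cancel₀ (by norm_cast),
      one_smul]

/-- Let `X` be a complex Banach space and `m = k + 2 ≥ 2`.  A continuous
`(m-1)`-homogeneous polynomial `Q ∈ 𝓟(^{m-1}X, X*)` (represented by its continuous symmetric
`(m-1)`-linear map) is the differential `dP` of some `P ∈ 𝓟(^m X)` iff
`y ∘ d(x ∘ Q) = x ∘ d(y ∘ Q)` as elements of `𝓟(^{m-2}X)`, for all `x, y ∈ X`. -/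
theorem stmt5 (X : Type*) [NormedAddCommGroup X] [NormedSpace ℂ X] [CompleteSpace X] (k : ℕ)
    (Q : ContinuousMultilinearMap ℂ (fun _ : Fin (k + 1) => X) (X →L[ℂ] ℂ))
    (hQ : ∀ (σ : Equiv.Perm (Fin (k + 1))) (v : Fin (k + 1) → X), Q (v ∘ σ) = Q v) :
    (∃ P : ContinuousMultilinearMap ℂ (fun _ : Fin (k + 2) => X) ℂ,
        (∀ (σ : Equiv.Perm (Fin (k + 2))) (v : Fin (k + 2) → X), P (v ∘ σ) = P v) ∧
        ∀ u x : X, Q (fun _ => u) x = fderiv ℂ (fun v : X => P fun _ => v) u x) ↔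
    (∀ x y : X,
        (fun u : X => fderiv ℂ (fun v : X => Q (fun _ => v) x) u y) =
          fun u : X => fderiv ℂ (fun v : X => Q (fun _ => v) y) u x) :=
  stmt5_general X k Q hQ
end

section
/- Let X be a complex Banach space, m ≥ 2, and let x*, y* be nonzero elements of X*. The (m−1)-homogeneous polynomial Q ∈ 𝓟(^{m−1}X, X*) given by Q(u) = x*(u)^{m−1} · y* satisfies Q = dP for some P ∈ 𝓟(^m X) if and only if x* = α y* for some α ∈ ℂ. -/
/-!
If `P` is an `m`-linear form whose differential is `u ↦ x*(u)^{m-1} • y*`, then the second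
derivative of `u ↦ P(u, …, u)` at a point `u₀` with `x*(u₀) ≠ 0` is a nonzero multiple of
`(v, w) ↦ x*(v) y*(w)`. Symmetry of second derivatives forces `x*(v) y*(w) = x*(w) y*(v)`, so `x*`
is proportional to `y*`. Conversely, for `x* = α y*` the form `α^{m-1}/m · y*(v₁) ⋯ y*(vₘ)` works.
-/

open ContinuousLinearMap

section

variable {𝕜 E : Type*} [NontriviallyNormedField 𝕜] [NormedAddCommGroup E] [NormedSpace 𝕜 E]

theorem exists_eq_smul_of_forall_mul_eq_mul {φ ψ : E →L[𝕜] 𝕜} (hψ : ψ ≠ 0)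
    (h : ∀ v w, φ v * ψ w = φ w * ψ v) : ∃ α : 𝕜, φ = α • ψ := by
  obtain ⟨w₀, hw₀⟩ : ∃ w₀, ψ w₀ ≠ 0 := by
    by_contra! h₀
    exact hψ (ext h₀)
  refine ⟨φ w₀ / ψ w₀, ext fun v => ?_⟩
  rw [smul_apply, smul_eq_mul, div_mul_eq_mul_div, eq_div_iff hw₀]
  exact h v w₀

theorem hasFDerivAt_pow_apply (ψ : E →L[𝕜] 𝕜) (n : ℕ) (u : E) :
    HasFDerivAt (fun v => ψ v ^ (n + 1)) (((n + 1 : 𝕜) * ψ u ^ n) • ψ) u := by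
  simpa using ψ.hasFDerivAt.pow (n + 1)

theorem exists_symmetric_multilinear_diag_eq_pow (ψ : E →L[𝕜] 𝕜) (m : ℕ) :
    ∃ P : ContinuousMultilinearMap 𝕜 (fun _ : Fin m => E) 𝕜,
      (∀ (σ : Equiv.Perm (Fin m)) (v : Fin m → E), P (v ∘ σ) = P v) ∧
      ∀ v, P (fun _ => v) = ψ v ^ m := by
  refine ⟨(ContinuousMultilinearMap.mkPiAlgebra 𝕜 (Fin m) 𝕜).compContinuousLinearMap fun _ => ψ,
    fun σ v => ?_, fun v => ?_⟩ <;>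
    simp only [ContinuousMultilinearMap.compContinuousLinearMap_apply,
      ContinuousMultilinearMap.mkPiAlgebra_apply]
  · exact Equiv.prod_comp σ fun i => ψ (v i)
  · simp

end

theorem mul_eq_mul_of_hasFDerivAt_pow_smul {𝕜 E : Type*} [RCLike 𝕜] [NormedAddCommGroup E]
    [NormedSpace 𝕜 E] {f : E → 𝕜} {φ ψ : E →L[𝕜] 𝕜} {n : ℕ}
    (hf : ∀ u, HasFDerivAt f (φ u ^ (n + 1) • ψ) u) (v w : E) : φ v * ψ w = φ w * ψ v := by
  by_cases hφ : φ = 0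
  · simp [hφ]
  obtain ⟨u₀, hu₀⟩ : ∃ u₀, φ u₀ ≠ 0 := by
    by_contra! h₀
    exact hφ (ext h₀)
  set c : 𝕜 := (n + 1 : 𝕜) * φ u₀ ^ n
  have hc : c ≠ 0 := mul_ne_zero (by exact_mod_cast n.succ_ne_zero) (pow_ne_zero n hu₀)
  have hf' : HasFDerivAt (fun u => φ u ^ (n + 1) • ψ) ((toSpanSingleton 𝕜 ψ).comp (c • φ)) u₀ :=
    (toSpanSingleton 𝕜 ψ).hasFDerivAt.comp u₀ (hasFDerivAt_pow_apply φ n u₀)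
  have hsymm := second_derivative_symmetric hf hf' v w
  simp only [comp_apply, smul_apply, toSpanSingleton_apply, smul_eq_mul] at hsymm
  apply mul_left_cancel₀ hc
  linear_combination hsymm

theorem stmt6_general (X : Type*) [NormedAddCommGroup X] [NormedSpace ℂ X] (k : ℕ)
    (xs ys : X →L[ℂ] ℂ) (hys : ys ≠ 0)
    (Q : X → (X →L[ℂ] ℂ)) (hQ : ∀ u : X, Q u = (xs u) ^ (k + 1) • ys) :
    (∃ P : ContinuousMultilinearMap ℂ (fun _ : Fin (k + 2) => X) ℂ,
        (∀ (σ : Equiv.Perm (Fin (k + 2))) (v : Fin (k + 2) → X), P (v ∘ σ) = P v) ∧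
        ∀ u x : X, Q u x = fderiv ℂ (fun v : X => P fun _ => v) u x) ↔
    ∃ α : ℂ, xs = α • ys := by
  constructor
  · rintro ⟨P, -, hP⟩
    have hdiff : Differentiable ℂ fun v : X => P fun _ => v :=
      (P.contDiff.comp (contDiff_pi.2 fun _ => contDiff_id)).differentiable one_ne_zero
    refine exists_eq_smul_of_forall_mul_eq_mul hys (mul_eq_mul_of_hasFDerivAt_pow_smul
      (f := fun v : X => P fun _ => v) (n := k) fun u => ?_)
    rw [← hQ, show Q u = fderiv ℂ _ u from ext (hP u)]
    exact (hdiff u).hasFDerivAt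
  · rintro ⟨α, rfl⟩
    obtain ⟨P, hPsymm, hPdiag⟩ := exists_symmetric_multilinear_diag_eq_pow ys (k + 2)
    have hk : (k + 2 : ℂ) ≠ 0 := by exact_mod_cast (k + 1).succ_ne_zero
    set c : ℂ := α ^ (k + 1) / (k + 2)
    refine ⟨c • P, fun σ v => by simp [hPsymm], fun u x => ?_⟩
    have hd : HasFDerivAt (fun v : X => (c • P) fun _ => v)
        (c • (((k + 1 + 1 : ℂ) * ys u ^ (k + 1)) • ys)) u := by
      simpa [hPdiag] using (hasFDerivAt_pow_apply ys (k + 1) u).const_mul c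
    rw [hd.fderiv, hQ]
    simp only [smul_apply, smul_eq_mul, c]
    field_simp
    ring

/-- Let `X` be a complex Banach space, `m = k + 2 ≥ 2`, and `x*, y* ∈ X*`
nonzero.  The `(m-1)`-homogeneous polynomial `Q(u) = x*(u)^{m-1} • y*` is the differential `dP`
of some `P ∈ 𝓟(^m X)` iff `x* = α y*` for some `α ∈ ℂ`. -/
theorem stmt6 (X : Type*) [NormedAddCommGroup X] [NormedSpace ℂ X] [CompleteSpace X] (k : ℕ)
    (xs ys : X →L[ℂ] ℂ) (hxs : xs ≠ 0) (hys : ys ≠ 0)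
    (Q : X → (X →L[ℂ] ℂ)) (hQ : ∀ u : X, Q u = (xs u) ^ (k + 1) • ys) :
    (∃ P : ContinuousMultilinearMap ℂ (fun _ : Fin (k + 2) => X) ℂ,
        (∀ (σ : Equiv.Perm (Fin (k + 2))) (v : Fin (k + 2) → X), P (v ∘ σ) = P v) ∧
        ∀ u x : X, Q u x = fderiv ℂ (fun v : X => P fun _ => v) u x) ↔
    ∃ α : ℂ, xs = α • ys :=
  stmt6_general X k xs ys hys Q hQ
end

section
/- Let X be a complex Banach space with unit sphere S_X, m ≥ 2, and Q ∈ 𝓟(^{m−1}X, X*). Then Q = dP for some P ∈ 𝓟(^m X) if and only if y∘d(x∘Q) = x∘d(y∘Q) for all x, y ∈ S_X. Consequently, 𝓗^∞_s(B_X, X*) coincides with the set of g ∈ 𝓗^∞(B_X, X*) satisfying y∘d(x∘g) = x∘d(y∘g) for every x, y ∈ S_X. -/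
/-!
If `Q = dP`, then `u ↦ x ∘ Q(u)` is `u ↦ dP(u) x`, whose derivative in direction `y` is
`d²P(u)(y, x)`: symmetric by Schwarz's theorem. Conversely, both sides of the condition are
bilinear in `(x, y)`, so it extends from the sphere by homogeneity, and for symmetric `Q` the
derivative of `x ∘ Q` at `u` in direction `y` is `(m - 1) Q(y, u, …, u)(x)`. Hence
`Q(y, u, …, u)(x) = Q(x, u, …, u)(y)`, which says that `(v₁, …, vₘ) ↦ Q(v₁, …, vₘ₋₁)(vₘ)` takes the
value `Q(u, …, u)(x)` whenever one argument is `x` and the others are `u`. Its symmetrization,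
divided by `m · m!`, is the required `P`. The statement for `g` is the same homogeneity argument
applied to the bilinear map `dg(z)`.
-/

open Function

section FDeriv

variable {𝕜 E F G : Type*} [NontriviallyNormedField 𝕜] [NormedAddCommGroup E] [NormedSpace 𝕜 E]
  [NormedAddCommGroup F] [NormedSpace 𝕜 F] [NormedAddCommGroup G] [NormedSpace 𝕜 G]

theorem fderiv_clm_apply_const {c : E → F →L[𝕜] G} {z : E} (hc : DifferentiableAt 𝕜 c z)
    (x : F) : fderiv 𝕜 (fun u => c u x) z = (fderiv 𝕜 c z).flip x := by
  simp [fderiv_clm_apply hc (differentiableAt_const x)]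

end FDeriv

section Sphere

variable {𝕜 E F G : Type*} [RCLike 𝕜] [NormedAddCommGroup E] [NormedSpace 𝕜 E]
  [NormedAddCommGroup F] [NormedSpace 𝕜 F] [NormedAddCommGroup G] [NormedSpace 𝕜 G]

theorem ContinuousLinearMap.ext_sphere {f g : E →L[𝕜] F} (h : ∀ x, ‖x‖ = 1 → f x = g x) :
    f = g := by
  ext x
  rcases eq_or_ne x 0 with rfl | hx
  · simp
  have hx' : (‖x‖ : 𝕜) ≠ 0 := by simpa using hx
  simpa [hx'] using congrArg ((‖x‖ : 𝕜) • ·) (h _ (norm_smul_inv_norm (𝕜 := 𝕜) hx))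

theorem ContinuousLinearMap.ext_sphere₂ {B B' : E →L[𝕜] F →L[𝕜] G}
    (h : ∀ x y, ‖x‖ = 1 → ‖y‖ = 1 → B x y = B' x y) : B = B' :=
  ext_sphere fun x hx => ext_sphere fun y hy => h x y hx hy

theorem fderiv_apply_comm_of_sphere {c : E → E →L[𝕜] F} {z : E} (hc : DifferentiableAt 𝕜 c z)
    (h : ∀ x y, ‖x‖ = 1 → ‖y‖ = 1 →
      fderiv 𝕜 (fun u => c u x) z y = fderiv 𝕜 (fun u => c u y) z x)
    (x y : E) : fderiv 𝕜 (fun u => c u x) z y = fderiv 𝕜 (fun u => c u y) z x := by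
  simp only [fderiv_clm_apply_const hc, ContinuousLinearMap.flip_apply] at h ⊢
  exact congrArg (· x y) (ContinuousLinearMap.ext_sphere₂ (B := (fderiv 𝕜 c z).flip) h)

theorem fderiv_fderiv_apply_comm {p : E → F} (hp : ContDiff 𝕜 2 p) (z x y : E) :
    fderiv 𝕜 (fun u => fderiv 𝕜 p u x) z y = fderiv 𝕜 (fun u => fderiv 𝕜 p u y) z x := by
  have hp' : DifferentiableAt 𝕜 (fderiv 𝕜 p) z :=
    (hp.fderiv_right (m := 1) le_rfl).differentiable one_ne_zero z
  simp only [fderiv_clm_apply_const hp', ContinuousLinearMap.flip_apply]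
  exact hp.contDiffAt.isSymmSndFDerivAt (by simp) y x

end Sphere

namespace ContinuousMultilinearMap

section Diagonal

variable {𝕜 ι X E : Type*} [NontriviallyNormedField 𝕜] [Fintype ι] [DecidableEq ι]
  [NormedAddCommGroup X] [NormedSpace 𝕜 X] [NormedAddCommGroup E] [NormedSpace 𝕜 E]
  (f : ContinuousMultilinearMap 𝕜 (fun _ : ι => X) E)

omit [DecidableEq ι] in
theorem contDiff_diag {n : WithTop ℕ∞} : ContDiff 𝕜 n fun v : X => f fun _ => v :=
  f.contDiff.comp (contDiff_pi.2 fun _ => contDiff_id)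

omit [DecidableEq ι] in
theorem differentiable_diag : Differentiable 𝕜 fun v : X => f fun _ => v :=
  f.contDiff_diag.differentiable one_ne_zero

theorem fderiv_diag_apply (u x : X) :
    fderiv 𝕜 (fun v : X => f fun _ => v) u x = ∑ i, f (update (fun _ => u) i x) := by
  have hdiag : HasFDerivAt (fun v : X => fun _ : ι => v)
      (ContinuousLinearMap.pi fun _ => ContinuousLinearMap.id 𝕜 X) u :=
    (ContinuousLinearMap.pi fun _ => ContinuousLinearMap.id 𝕜 X).hasFDerivAt
  rw [show (fun v : X => f fun _ => v) = f ∘ fun v _ => v from rfl,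
    (f.hasFDerivAt _ |>.comp u hdiag).fderiv]
  simp

omit [Fintype ι] in
theorem apply_update_const_eq (hf : ∀ (σ : Equiv.Perm ι) v, f (v ∘ σ) = f v) (u x : X)
    (i j : ι) : f (update (fun _ => u) i x) = f (update (fun _ => u) j x) := by
  rw [← hf (Equiv.swap i j), update_comp_equiv]
  simp [comp_def]

theorem fderiv_diag_apply_of_symm (hf : ∀ (σ : Equiv.Perm ι) v, f (v ∘ σ) = f v) (u x : X)
    (i : ι) :
    fderiv 𝕜 (fun v : X => f fun _ => v) u x = Fintype.card ι • f (update (fun _ => u) i x) := by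
  simp [fderiv_diag_apply, apply_update_const_eq f hf u x _ i]

def symmetrize : ContinuousMultilinearMap 𝕜 (fun _ : ι => X) E :=
  ∑ σ : Equiv.Perm ι, f.domDomCongr σ

theorem symmetrize_apply (v : ι → X) : f.symmetrize v = ∑ σ : Equiv.Perm ι, f (v ∘ σ) := by
  simp only [symmetrize, sum_apply, domDomCongr_apply]
  rfl

theorem symmetrize_comp_perm (τ : Equiv.Perm ι) (v : ι → X) :
    f.symmetrize (v ∘ τ) = f.symmetrize v := by
  simp only [symmetrize_apply]
  exact Equiv.sum_comp (Equiv.mulLeft τ) fun σ => f (v ∘ σ)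

theorem symmetrize_update_const {u x : X} {c : E} (h : ∀ i, f (update (fun _ => u) i x) = c)
    (j : ι) : f.symmetrize (update (fun _ => u) j x) = (Fintype.card ι).factorial • c := by
  simp only [symmetrize_apply, update_comp_equiv]
  simp [comp_def, h, Fintype.card_perm]

end Diagonal

section Curry

variable {𝕜 X G : Type*} [NontriviallyNormedField 𝕜] [NormedAddCommGroup X] [NormedSpace 𝕜 X]
  [NormedAddCommGroup G] [NormedSpace 𝕜 G] {n : ℕ}
  (Q : ContinuousMultilinearMap 𝕜 (fun _ : Fin (n + 1) => X) (X →L[𝕜] G))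
  (hQ : ∀ (σ : Equiv.Perm (Fin (n + 1))) v, Q (v ∘ σ) = Q v)
  (hswap : ∀ u x y : X, Q (update (fun _ => u) 0 y) x = Q (update (fun _ => u) 0 x) y)
include hQ hswap

theorem uncurryRight_update_const (u x : X) (i : Fin (n + 2)) :
    Q.uncurryRight (update (fun _ => u) i x) = Q (fun _ => u) x := by
  rw [uncurryRight_apply]
  induction i using Fin.lastCases with
  | last => rw [Fin.init_update_last, update_self]; rfl
  | cast j =>
    rw [Fin.init_update_castSucc, update_of_ne (Fin.castSucc_lt_last j).ne',
      show Fin.init (fun _ : Fin (n + 2) => u) = fun _ => u from rfl,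
      apply_update_const_eq Q hQ u x j 0, hswap, update_eq_self]

theorem exists_symm_fderiv_diag_eq [CharZero 𝕜] :
    ∃ P : ContinuousMultilinearMap 𝕜 (fun _ : Fin (n + 2) => X) G,
      (∀ (σ : Equiv.Perm (Fin (n + 2))) v, P (v ∘ σ) = P v) ∧
      ∀ u x : X, Q (fun _ => u) x = fderiv 𝕜 (fun v : X => P fun _ => v) u x := by
  set c : 𝕜 := (((n + 2) * (n + 2).factorial : ℕ) : 𝕜)
  refine ⟨c⁻¹ • Q.uncurryRight.symmetrize, fun σ v => ?_, fun u x => ?_⟩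
  · simp only [smul_apply, symmetrize_comp_perm]
  · have hc : c ≠ 0 := Nat.cast_ne_zero.2 (by positivity)
    rw [fderiv_diag_apply]
    simp only [smul_apply, symmetrize_update_const _ (uncurryRight_update_const Q hQ hswap u x),
      Finset.sum_const, Finset.card_univ, Fintype.card_fin, ← Nat.cast_smul_eq_nsmul 𝕜,
      smul_smul]
    refine (one_smul 𝕜 _).symm.trans (congrArg (· • _) ?_)
    rw [mul_left_comm, ← Nat.cast_mul]
    exact (inv_mul_cancel₀ hc).symm

end Curry

end ContinuousMultilinearMap

theorem stmt9_general (X : Type*) [NormedAddCommGroup X] [NormedSpace ℂ X] (k : ℕ)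
    (Q : ContinuousMultilinearMap ℂ (fun _ : Fin (k + 1) => X) (X →L[ℂ] ℂ))
    (hQ : ∀ (σ : Equiv.Perm (Fin (k + 1))) (v : Fin (k + 1) → X), Q (v ∘ σ) = Q v) :
    ((∃ P : ContinuousMultilinearMap ℂ (fun _ : Fin (k + 2) => X) ℂ,
        (∀ (σ : Equiv.Perm (Fin (k + 2))) (v : Fin (k + 2) → X), P (v ∘ σ) = P v) ∧
        ∀ u x : X, Q (fun _ => u) x = fderiv ℂ (fun v : X => P fun _ => v) u x) ↔
      (∀ x y : X, ‖x‖ = 1 → ‖y‖ = 1 → ∀ u : X,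
        fderiv ℂ (fun v : X => Q (fun _ => v) x) u y =
          fderiv ℂ (fun v : X => Q (fun _ => v) y) u x)) ∧
    (∀ g : X → (X →L[ℂ] ℂ),
      DifferentiableOn ℂ g (Metric.ball (0 : X) 1) →
      (∃ C : ℝ, ∀ z ∈ Metric.ball (0 : X) 1, ‖g z‖ ≤ C) →
      ((∀ x y : X, ∀ z ∈ Metric.ball (0 : X) 1,
          fderiv ℂ (fun u => g u x) z y = fderiv ℂ (fun u => g u y) z x) ↔
        (∀ x y : X, ‖x‖ = 1 → ‖y‖ = 1 → ∀ z ∈ Metric.ball (0 : X) 1,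
          fderiv ℂ (fun u => g u x) z y = fderiv ℂ (fun u => g u y) z x))) := by
  constructor
  · constructor
    · rintro ⟨P, -, hPQ⟩ x y - - u
      simp only [hPQ]
      exact fderiv_fderiv_apply_comm P.contDiff_diag u x y
    · intro hsph
      refine Q.exists_symm_fderiv_diag_eq hQ fun u x y => ?_
      have hcomm := fderiv_apply_comm_of_sphere (Q.differentiable_diag u)
        (fun x y hx hy => hsph x y hx hy u) x y
      simp only [fderiv_clm_apply_const (Q.differentiable_diag u),
        ContinuousLinearMap.flip_apply, Q.fderiv_diag_apply_of_symm hQ u _ 0] at hcomm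
      simpa [Nat.cast_add_one_ne_zero] using hcomm
  · intro g hg _
    refine ⟨fun h x y _ _ z hz => h x y z hz, fun hsph x y z hz => ?_⟩
    exact fderiv_apply_comm_of_sphere (hg.differentiableAt (Metric.isOpen_ball.mem_nhds hz))
      (fun x y hx hy => hsph x y hx hy z hz) x y

/-- Let `X` be a complex Banach space with unit sphere `S_X`, `m = k + 2 ≥ 2`,
and `Q ∈ 𝓟(^{m-1}X, X*)`.  Then `Q = dP` for some `P ∈ 𝓟(^m X)` iff
`y ∘ d(x ∘ Q) = x ∘ d(y ∘ Q)` for all `x, y ∈ S_X`.  Consequently `𝓗^∞_s(B_X, X*)` coincides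
with the set of `g ∈ 𝓗^∞(B_X, X*)` satisfying `y ∘ d(x ∘ g) = x ∘ d(y ∘ g)` for every
`x, y ∈ S_X`. -/
theorem stmt9 (X : Type*) [NormedAddCommGroup X] [NormedSpace ℂ X] [CompleteSpace X] (k : ℕ)
    (Q : ContinuousMultilinearMap ℂ (fun _ : Fin (k + 1) => X) (X →L[ℂ] ℂ))
    (hQ : ∀ (σ : Equiv.Perm (Fin (k + 1))) (v : Fin (k + 1) → X), Q (v ∘ σ) = Q v) :
    ((∃ P : ContinuousMultilinearMap ℂ (fun _ : Fin (k + 2) => X) ℂ,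
        (∀ (σ : Equiv.Perm (Fin (k + 2))) (v : Fin (k + 2) → X), P (v ∘ σ) = P v) ∧
        ∀ u x : X, Q (fun _ => u) x = fderiv ℂ (fun v : X => P fun _ => v) u x) ↔
      (∀ x y : X, ‖x‖ = 1 → ‖y‖ = 1 → ∀ u : X,
        fderiv ℂ (fun v : X => Q (fun _ => v) x) u y =
          fderiv ℂ (fun v : X => Q (fun _ => v) y) u x)) ∧
    (∀ g : X → (X →L[ℂ] ℂ),
      DifferentiableOn ℂ g (Metric.ball (0 : X) 1) →
      (∃ C : ℝ, ∀ z ∈ Metric.ball (0 : X) 1, ‖g z‖ ≤ C) →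
      ((∀ x y : X, ∀ z ∈ Metric.ball (0 : X) 1,
          fderiv ℂ (fun u => g u x) z y = fderiv ℂ (fun u => g u y) z x) ↔
        (∀ x y : X, ‖x‖ = 1 → ‖y‖ = 1 → ∀ z ∈ Metric.ball (0 : X) 1,
          fderiv ℂ (fun u => g u x) z y = fderiv ℂ (fun u => g u y) z x))) :=
  stmt9_general X k Q hQ
end

section
/- Let X be a complex Banach space, m ≥ 2, and Q ∈ 𝓟(^{m−1}X, X*) with associated continuous symmetric (m−1)-linear map Q̌. If Q̌(u,…,u,y)(x) = Q̌(u,…,u,x)(y) for all u, x, y ∈ X, then Q̌(u₁,…,u_{m−2}, y)(x) = Q̌(u₁,…,u_{m−2}, x)(y) for all u₁,…,u_{m−2}, x, y ∈ X. -/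
/-!
The map `S(w) = Q̌(w, y)(x) - Q̌(w, x)(y)` is a continuous symmetric `(m-2)`-linear form which, by
hypothesis, vanishes on the diagonal. Polarization kills it: the `n`-th derivative of
`u ↦ f(u, …, u)` is `∑_σ f(v ∘ σ) = n! f(v)` for symmetric `f`, and it is zero when the
diagonal restriction is.
-/

theorem ContinuousMultilinearMap.eq_zero_of_symmetric_of_vanishes_on_diagonal
    {𝕜 E F : Type*} [NontriviallyNormedField 𝕜] [CharZero 𝕜] [NormedAddCommGroup E]
    [NormedSpace 𝕜 E] [NormedAddCommGroup F] [NormedSpace 𝕜 F] {n : ℕ}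
    (f : E [×n]→L[𝕜] F) (hsymm : ∀ (σ : Equiv.Perm (Fin n)) (v : Fin n → E), f (v ∘ σ) = f v)
    (hdiag : ∀ x, f (fun _ => x) = 0) : f = 0 := by
  ext v
  have hsum : (n.factorial : 𝕜) • f v = 0 :=
    calc (n.factorial : 𝕜) • f v = ∑ σ : Equiv.Perm (Fin n), f (v ∘ σ) := by
          simp [hsymm, Fintype.card_perm, Nat.cast_smul_eq_nsmul]
      _ = iteratedFDeriv 𝕜 n (fun x => f fun _ => x) 0 v :=
          (f.iteratedFDeriv_comp_diagonal 0 v).symm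
      _ = 0 := by simp [funext hdiag]
  exact (smul_eq_zero.mp hsum).resolve_left (Nat.cast_ne_zero.mpr n.factorial_ne_zero)

theorem Fin.snoc_comp_perm {α : Type*} {n : ℕ} (w : Fin n → α) (z : α)
    (σ : Equiv.Perm (Fin n)) :
    Fin.snoc (w ∘ σ) z = Fin.snoc w z ∘ finSuccEquivLast.symm.permCongr σ.optionCongr := by
  funext i
  refine Fin.lastCases ?_ (fun j => ?_) i <;> simp [Equiv.permCongr_apply]

theorem stmt10_general (X : Type*) [NormedAddCommGroup X] [NormedSpace ℂ X] (k : ℕ)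
    (Q : ContinuousMultilinearMap ℂ (fun _ : Fin (k + 1) => X) (X →L[ℂ] ℂ))
    (hQ : ∀ (σ : Equiv.Perm (Fin (k + 1))) (v : Fin (k + 1) → X), Q (v ∘ σ) = Q v)
    (h : ∀ u x y : X,
      Q (Fin.snoc (fun _ : Fin k => u) y) x = Q (Fin.snoc (fun _ : Fin k => u) x) y) :
    ∀ (u : Fin k → X) (x y : X), Q (Fin.snoc u y) x = Q (Fin.snoc u x) y := by
  intro u x y
  let S : ContinuousMultilinearMap ℂ (fun _ : Fin k => X) ℂ :=
    (.apply ℂ ℂ x ∘L .apply ℂ _ y - .apply ℂ ℂ y ∘L .apply ℂ _ x :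
      (X →L[ℂ] X →L[ℂ] ℂ) →L[ℂ] ℂ).compContinuousMultilinearMap Q.curryRight
  have hS : ∀ w, S w = Q (Fin.snoc w y) x - Q (Fin.snoc w x) y := fun w => rfl
  have hS_zero : S = 0 := S.eq_zero_of_symmetric_of_vanishes_on_diagonal
    (fun σ w => by simp only [hS, Fin.snoc_comp_perm, hQ]) (fun v => by rw [hS, h, sub_self])
  rw [← sub_eq_zero, ← hS, hS_zero]
  rfl

/-- Let `X` be a complex Banach space, `m = k + 2 ≥ 2`, and `Q̌` the continuous
symmetric `(m-1)`-linear map associated to `Q ∈ 𝓟(^{m-1}X, X*)`.  If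
`Q̌(u,…,u,y)(x) = Q̌(u,…,u,x)(y)` for all `u, x, y ∈ X`, then
`Q̌(u₁,…,u_{m-2},y)(x) = Q̌(u₁,…,u_{m-2},x)(y)` for all `u₁,…,u_{m-2}, x, y ∈ X`. -/
theorem stmt10 (X : Type*) [NormedAddCommGroup X] [NormedSpace ℂ X] [CompleteSpace X] (k : ℕ)
    (Q : ContinuousMultilinearMap ℂ (fun _ : Fin (k + 1) => X) (X →L[ℂ] ℂ))
    (hQ : ∀ (σ : Equiv.Perm (Fin (k + 1))) (v : Fin (k + 1) → X), Q (v ∘ σ) = Q v)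
    (h : ∀ u x y : X,
      Q (Fin.snoc (fun _ : Fin k => u) y) x = Q (Fin.snoc (fun _ : Fin k => u) x) y) :
    ∀ (u : Fin k → X) (x y : X), Q (Fin.snoc u y) x = Q (Fin.snoc u x) y :=
  stmt10_general X k Q hQ h
end

section
/- Let X be a complex Banach space with a Schauder basis {eₙ}ₙ and let g ∈ 𝓗^∞(B_X, X*). Write gₙ = eₙ∘g : B_X → ℂ, i.e. gₙ(x) = g(x)(eₙ). Then g = df for some f ∈ 𝓗𝓛₀(B_X) if and only if (∂gₙ/∂x_k)(x) = (∂g_k/∂xₙ)(x) for every x ∈ B_X and all k, n ∈ ℕ, where (∂gₙ/∂x_k)(x) denotes the directional derivative d(gₙ)(x)(e_k). -/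
/-!
The coordinate condition says that `dg(x)` is symmetric on the basis vectors; since the span of a
Schauder basis is dense, `dg(x)` is then a symmetric bilinear form, i.e. `g` is a closed 1-form.
Necessity is the symmetry of second derivatives of `f`. Sufficiency is the Poincaré lemma on the
convex ball, and the primitive is Lipschitz by the mean value inequality because `g` is bounded.
-/

open Filter Metric Set Topology

theorem dense_span_of_forall_tendsto_sum {𝕜 E : Type*} [Semiring 𝕜] [TopologicalSpace E]
    [AddCommMonoid E] [Module 𝕜 E] {e : ℕ → E}
    (h : ∀ x : E, ∃ a : ℕ → 𝕜, Tendsto (fun N => ∑ n ∈ Finset.range N, a n • e n) atTop (𝓝 x)) :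
    Dense (Submodule.span 𝕜 (range e) : Set E) := by
  intro x
  obtain ⟨a, ha⟩ := h x
  exact mem_closure_of_tendsto ha <| .of_forall fun N =>
    Submodule.sum_mem _ fun n _ => Submodule.smul_mem _ _ (Submodule.subset_span ⟨n, rfl⟩)

theorem ContinuousLinearMap.apply_apply_comm_of_dense_span {𝕜 ι E F : Type*}
    [NontriviallyNormedField 𝕜] [NormedAddCommGroup E] [NormedSpace 𝕜 E] [NormedAddCommGroup F]
    [NormedSpace 𝕜 F] {e : ι → E} (hd : Dense (Submodule.span 𝕜 (range e) : Set E))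
    (B : E →L[𝕜] E →L[𝕜] F)
    (h : ∀ m n, B (e m) (e n) = B (e n) (e m)) (x y : E) : B x y = B y x := by
  suffices B.flip = B by simpa using congr($this y x)
  refine ContinuousLinearMap.ext_on hd ?_
  rintro _ ⟨m, rfl⟩
  refine ContinuousLinearMap.ext_on hd ?_
  rintro _ ⟨n, rfl⟩
  exact h n m

theorem fderiv_apply_const_apply {𝕜 E F G : Type*} [NontriviallyNormedField 𝕜]
    [NormedAddCommGroup E] [NormedSpace 𝕜 E] [NormedAddCommGroup F] [NormedSpace 𝕜 F]
    [NormedAddCommGroup G] [NormedSpace 𝕜 G] {g : E → F →L[𝕜] G} {x : E}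
    (hg : DifferentiableAt 𝕜 g x) (v : E) (c : F) :
    fderiv 𝕜 (fun u => g u c) x v = fderiv 𝕜 g x v c := by
  simp [fderiv_clm_apply hg (differentiableAt_const c)]

theorem Convex.exists_lipschitzOnWith_primitive {E F : Type*} [NormedAddCommGroup E]
    [NormedSpace ℂ E] [NormedAddCommGroup F] [NormedSpace ℂ F] [CompleteSpace F] {s : Set E}
    (hs : Convex ℝ s) (hso : IsOpen s) (a : E) {ω : E → E →L[ℂ] F} (hω : DifferentiableOn ℂ ω s)
    (hsymm : ∀ z ∈ s, ∀ v w, fderiv ℂ ω z v w = fderiv ℂ ω z w v) {C : ℝ}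
    (hC : ∀ z ∈ s, ‖ω z‖ ≤ C) :
    ∃ f : E → F, f a = 0 ∧ (∀ z ∈ s, HasFDerivAt f (ω z) z) ∧
      LipschitzOnWith C.toNNReal f s := by
  obtain ⟨f, hf⟩ := hs.exists_forall_hasFDerivAt_of_fderiv_symmetric hso
    (hω.restrictScalars ℝ) fun z hz v w => by
      simpa [(hω.differentiableAt (hso.mem_nhds hz)).fderiv_restrictScalars ℝ]
        using hsymm z hz v w
  refine ⟨fun z => f z - f a, sub_self _, fun z hz => (hf z hz).sub_const _, ?_⟩
  refine hs.lipschitzOnWith_of_nnnorm_hasFDerivWithin_le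
    (fun z hz => ((hf z hz).sub_const _).hasFDerivWithinAt) fun z hz => ?_
  rw [← norm_toNNReal]
  exact Real.toNNReal_mono (hC z hz)

theorem stmt12_general (X : Type*) [NormedAddCommGroup X] [NormedSpace ℂ X]
    (e : ℕ → X)
    (hbasis : ∀ x : X, ∃! a : ℕ → ℂ,
      Filter.Tendsto (fun N => ∑ n ∈ Finset.range N, a n • e n) Filter.atTop (nhds x))
    (g : X → (X →L[ℂ] ℂ))
    (hg : DifferentiableOn ℂ g (Metric.ball (0 : X) 1))
    (hgb : ∃ C : ℝ, ∀ z ∈ Metric.ball (0 : X) 1, ‖g z‖ ≤ C) :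
    (∃ f : X → ℂ,
        (DifferentiableOn ℂ f (Metric.ball (0 : X) 1) ∧ f 0 = 0 ∧
          ∃ K : NNReal, LipschitzOnWith K f (Metric.ball (0 : X) 1)) ∧
        ∀ z ∈ Metric.ball (0 : X) 1, fderiv ℂ f z = g z) ↔
    (∀ m n : ℕ, ∀ x ∈ Metric.ball (0 : X) 1,
      fderiv ℂ (fun u => g u (e n)) x (e m) = fderiv ℂ (fun u => g u (e m)) x (e n)) := by
  have hgx : ∀ x ∈ ball (0 : X) 1, DifferentiableAt ℂ g x :=
    fun x hx => hg.differentiableAt (isOpen_ball.mem_nhds hx)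
  constructor
  · rintro ⟨f, ⟨hfd, -, -⟩, hdf⟩ m n x hx
    have hfg : ∀ᶠ y in 𝓝 x, HasFDerivAt f (g y) y := by
      filter_upwards [isOpen_ball.mem_nhds hx] with y hy
      exact hdf y hy ▸ (hfd.differentiableAt (isOpen_ball.mem_nhds hy)).hasFDerivAt
    simpa [fderiv_apply_const_apply (hgx x hx)] using
      second_derivative_symmetric_of_eventually hfg (hgx x hx).hasFDerivAt (e m) (e n)
  · intro h
    obtain ⟨C, hC⟩ := hgb
    have hdense := dense_span_of_forall_tendsto_sum fun x => (hbasis x).exists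
    have hsymm : ∀ z ∈ ball (0 : X) 1, ∀ v w, fderiv ℂ g z v w = fderiv ℂ g z w v := by
      intro z hz
      refine ContinuousLinearMap.apply_apply_comm_of_dense_span hdense _ fun m n => ?_
      simpa [fderiv_apply_const_apply (hgx z hz)] using h m n z hz
    obtain ⟨f, hf0, hdf, hlip⟩ := (convex_ball 0 1).exists_lipschitzOnWith_primitive isOpen_ball
      0 hg hsymm hC
    exact ⟨f, ⟨fun z hz => (hdf z hz).differentiableAt.differentiableWithinAt, hf0, _, hlip⟩,
      fun z hz => (hdf z hz).fderiv⟩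

/-- Let `X` be a complex Banach space with a Schauder basis `{eₙ}` and
`g ∈ 𝓗^∞(B_X, X*)`, with coordinates `gₙ = eₙ ∘ g`.  Then `g = df` for some `f ∈ 𝓗𝓛₀(B_X)`
iff `∂gₙ/∂x_k (x) = ∂g_k/∂xₙ (x)` for every `x ∈ B_X` and all `k, n ∈ ℕ`, where
`∂gₙ/∂x_k (x) = d(gₙ)(x)(e_k)`. -/
theorem stmt12 (X : Type*) [NormedAddCommGroup X] [NormedSpace ℂ X] [CompleteSpace X]
    (e : ℕ → X)
    (hbasis : ∀ x : X, ∃! a : ℕ → ℂ,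
      Filter.Tendsto (fun N => ∑ n ∈ Finset.range N, a n • e n) Filter.atTop (nhds x))
    (g : X → (X →L[ℂ] ℂ))
    (hg : DifferentiableOn ℂ g (Metric.ball (0 : X) 1))
    (hgb : ∃ C : ℝ, ∀ z ∈ Metric.ball (0 : X) 1, ‖g z‖ ≤ C) :
    (∃ f : X → ℂ,
        (DifferentiableOn ℂ f (Metric.ball (0 : X) 1) ∧ f 0 = 0 ∧
          ∃ K : NNReal, LipschitzOnWith K f (Metric.ball (0 : X) 1)) ∧
        ∀ z ∈ Metric.ball (0 : X) 1, fderiv ℂ f z = g z) ↔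
    (∀ m n : ℕ, ∀ x ∈ Metric.ball (0 : X) 1,
      fderiv ℂ (fun u => g u (e n)) x (e m) = fderiv ℂ (fun u => g u (e m)) x (e n)) :=
  stmt12_general X e hbasis g hg hgb
end

section
/- Let Y be a complex Banach space and 𝔻 the open unit disk in ℂ. The mapping Φ : 𝓗𝓛₀(𝔻, Y) → 𝓗^∞(𝔻, Y) given by Φ(f) = f′ is a surjective isometry: every bounded holomorphic g : 𝔻 → Y equals f′ for some holomorphic Lipschitz f : 𝔻 → Y with f(0) = 0, and L(f) = sup_{z∈𝔻} ‖f′(z)‖ for every f ∈ 𝓗𝓛₀(𝔻, Y). -/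
/-!
Every holomorphic function on a disk has a primitive (Morera), which can be normalised to vanish
at the centre; on a convex open set the mean value inequality and its converse at a point show
that a bound `K` is a Lipschitz bound for `f` exactly when it bounds `‖f'‖`. Hence the Lipschitz
bounds of `f` are precisely the upper bounds of `{‖f' z‖}`, and the least of them is their
supremum.
-/

open Metric

section LipschitzBounds

variable {𝕜 G : Type*} [RCLike 𝕜] [NormedAddCommGroup G] [NormedSpace 𝕜 G]
  {f : 𝕜 → G} {s : Set 𝕜}

theorem Convex.lipschitz_bound_iff_norm_deriv_le (hs : Convex ℝ s) (hso : IsOpen s)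
    (hf : DifferentiableOn 𝕜 f s) {K : ℝ} (hK : 0 ≤ K) :
    (∀ x ∈ s, ∀ y ∈ s, ‖f x - f y‖ ≤ K * ‖x - y‖) ↔ ∀ z ∈ s, ‖deriv f z‖ ≤ K := by
  have hdiff : ∀ z ∈ s, DifferentiableAt 𝕜 f z := fun z hz =>
    hf.differentiableAt (hso.mem_nhds hz)
  refine ⟨fun hL z hz => ?_,
    fun hD x hx y hy => hs.norm_image_sub_le_of_norm_deriv_le hdiff hD hy hx⟩
  refine (hdiff z hz).hasDerivAt.le_of_lip' hK ?_
  filter_upwards [hso.mem_nhds hz] with x hx using hL x hx z hz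

theorem Convex.sInf_lipschitz_bounds_eq_sSup_norm_deriv (hs : Convex ℝ s) (hso : IsOpen s)
    (hne : s.Nonempty) (hf : DifferentiableOn 𝕜 f s) (hlip : ∃ K, LipschitzOnWith K f s) :
    sInf {K : ℝ | 0 ≤ K ∧ ∀ x ∈ s, ∀ y ∈ s, ‖f x - f y‖ ≤ K * ‖x - y‖} =
      sSup {r : ℝ | ∃ z ∈ s, r = ‖deriv f z‖} := by
  set S := {r : ℝ | ∃ z ∈ s, r = ‖deriv f z‖}
  obtain ⟨z₀, hz₀⟩ := hne
  have upper_bound_iff : ∀ K, K ∈ upperBounds S ↔ ∀ z ∈ s, ‖deriv f z‖ ≤ K := fun K =>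
    ⟨fun hK z hz => hK ⟨z, hz, rfl⟩, by rintro hK _ ⟨z, hz, rfl⟩; exact hK z hz⟩
  have bounds_eq : {K : ℝ | 0 ≤ K ∧ ∀ x ∈ s, ∀ y ∈ s, ‖f x - f y‖ ≤ K * ‖x - y‖} =
      upperBounds S := by
    ext K
    rw [upper_bound_iff]
    refine ⟨fun ⟨hK, hL⟩ => (hs.lipschitz_bound_iff_norm_deriv_le hso hf hK).1 hL,
      fun hD => ?_⟩
    have hK : 0 ≤ K := (norm_nonneg _).trans (hD z₀ hz₀)
    exact ⟨hK, (hs.lipschitz_bound_iff_norm_deriv_le hso hf hK).2 hD⟩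
  obtain ⟨K, hK⟩ := hlip
  have hbdd : BddAbove S := ⟨K, bounds_eq ▸ ⟨K.coe_nonneg, fun x hx y hy => hK.norm_sub_le hx hy⟩⟩
  rw [bounds_eq, csInf_upperBounds_eq_csSup hbdd ⟨_, z₀, hz₀, rfl⟩]

end LipschitzBounds

theorem Complex.exists_lipschitzOnWith_primitive_of_norm_le {Y : Type*} [NormedAddCommGroup Y]
    [NormedSpace ℂ Y] [CompleteSpace Y] {g : ℂ → Y} {c : ℂ} {r C : ℝ}
    (hg : DifferentiableOn ℂ g (ball c r)) (hC : ∀ z ∈ ball c r, ‖g z‖ ≤ C) :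
    ∃ f : ℂ → Y, f c = 0 ∧ (∀ z ∈ ball c r, HasDerivAt f (g z) z) ∧
      LipschitzOnWith C.toNNReal f (ball c r) := by
  obtain ⟨f, hfc, hf⟩ := hg.isExactOn_ball.with_val_at c 0
  refine ⟨f, hfc, hf, (convex_ball c r).lipschitzOnWith_of_nnnorm_hasDerivWithin_le
    (fun z hz => (hf z hz).hasDerivWithinAt) fun z hz => ?_⟩
  rw [← norm_toNNReal]
  exact Real.toNNReal_le_toNNReal (hC z hz)

/-- Let `Y` be a complex Banach space and `𝔻` the open unit disk in `ℂ`.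
The map `Φ : 𝓗𝓛₀(𝔻, Y) → 𝓗^∞(𝔻, Y)`, `Φ f = f'`, is a surjective isometry: every bounded
holomorphic `g : 𝔻 → Y` equals `f'` for some holomorphic Lipschitz `f : 𝔻 → Y` with `f 0 = 0`,
and `L(f) = sup_{z ∈ 𝔻} ‖f'(z)‖` for every `f ∈ 𝓗𝓛₀(𝔻, Y)`. -/
theorem stmt16 (Y : Type*) [NormedAddCommGroup Y] [NormedSpace ℂ Y] [CompleteSpace Y] :
    let D := Metric.ball (0 : ℂ) 1
    let HL0 : (ℂ → Y) → Prop := fun f =>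
      DifferentiableOn ℂ f D ∧ f 0 = 0 ∧ ∃ K : NNReal, LipschitzOnWith K f D
    (∀ g : ℂ → Y, DifferentiableOn ℂ g D → (∃ C : ℝ, ∀ z ∈ D, ‖g z‖ ≤ C) →
      ∃ f : ℂ → Y, HL0 f ∧ ∀ z ∈ D, deriv f z = g z) ∧
    (∀ f : ℂ → Y, HL0 f →
      sInf {K : ℝ | 0 ≤ K ∧ ∀ x ∈ D, ∀ y ∈ D, ‖f x - f y‖ ≤ K * ‖x - y‖} =
        sSup {r : ℝ | ∃ z ∈ D, r = ‖deriv f z‖}) := by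
  intro D HL0
  refine ⟨fun g hg ⟨C, hC⟩ => ?_, fun f ⟨hf, _, hlip⟩ => ?_⟩
  · obtain ⟨f, hf0, hfg, hlip⟩ := Complex.exists_lipschitzOnWith_primitive_of_norm_le hg hC
    exact ⟨f, ⟨fun z hz => (hfg z hz).differentiableAt.differentiableWithinAt, hf0, _, hlip⟩,
      fun z hz => (hfg z hz).deriv⟩
  · exact (convex_ball 0 1).sInf_lipschitz_bounds_eq_sSup_norm_deriv isOpen_ball
      ⟨0, mem_ball_self one_pos⟩ hf hlip
end
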